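/- For a monad T = (T, η, μ) on a category C equipped with a left action ▷ of a monoidal category V, there is a bijection between (1) strong monad structures on T (Kleisli-extension presentations ♯ : C(Γ ▷ X, TY) → C(Γ ▷ TX, TY) natural in Γ satisfying the three strong-monad laws, with underlying monad T) and (2) strengths str for the functor T that make η and μ strong natural transformations, i.e. such that str_{Γ,X} ∘ (Γ ▷ η_X) = η_{Γ▷X} and str_{Γ,X} ∘ (Γ ▷ μ_X) = μ_{Γ▷X} ∘ T(str_{Γ,X}) ∘ str_{Γ,TX}. -/

import Mathlib

open CategoryTheory MonoidalCategory

universe v₁ v₂ v₃ u₁ u₂ u₃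

/-- A left action of a monoidal category `V` on a category `C`. -/
structure LeftAction (V : Type u₁) [Category.{v₁} V] [MonoidalCategory V]
    (C : Type u₂) [Category.{v₂} C] where
  F : V ⥤ C ⥤ C
  lam : ∀ X : C, (F.obj (𝟙_ V)).obj X ≅ X
  lam_natural : ∀ {X Y : C} (f : X ⟶ Y),
    (F.obj (𝟙_ V)).map f ≫ (lam Y).hom = (lam X).hom ≫ f
  assoc : ∀ (Γ' Γ : V) (X : C),
    (F.obj (Γ' ⊗ Γ)).obj X ≅ (F.obj Γ').obj ((F.obj Γ).obj X)
  assoc_natural : ∀ {Γ' Δ' Γ Δ : V} (u : Γ' ⟶ Δ') (v : Γ ⟶ Δ) {X Y : C} (f : X ⟶ Y),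
    (F.map (u ⊗ₘ v)).app X ≫ (F.obj (Δ' ⊗ Δ)).map f ≫ (assoc Δ' Δ Y).hom
      = (assoc Γ' Γ X).hom ≫ (F.map u).app ((F.obj Γ).obj X)
          ≫ (F.obj Δ').map ((F.map v).app X ≫ (F.obj Δ).map f)
  triangle : ∀ (Γ : V) (X : C),
    (F.map (ρ_ Γ).inv).app X ≫ (assoc Γ (𝟙_ V) X).hom ≫ (F.obj Γ).map (lam X).hom = 𝟙 _
  unit_assoc : ∀ (Γ : V) (X : C),
    (assoc (𝟙_ V) Γ X).hom ≫ (lam ((F.obj Γ).obj X)).hom = (F.map (λ_ Γ).hom).app X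
  pentagon : ∀ (Γ₁ Γ₂ Γ₃ : V) (X : C),
    (F.map (α_ Γ₁ Γ₂ Γ₃).hom).app X ≫ (assoc Γ₁ (Γ₂ ⊗ Γ₃) X).hom
        ≫ (F.obj Γ₁).map (assoc Γ₂ Γ₃ X).hom
      = (assoc (Γ₁ ⊗ Γ₂) Γ₃ X).hom ≫ (assoc Γ₁ Γ₂ ((F.obj Γ₃).obj X)).hom

namespace LeftAction

variable {V : Type u₁} [Category.{v₁} V] [MonoidalCategory V]
variable {C : Type u₂} [Category.{v₂} C] {D : Type u₃} [Category.{v₃} D]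

/-- `a.act Γ X` is the action of `Γ` on an object `X`, written `Γ ▷ X` in the paper. -/
abbrev act (a : LeftAction V C) (Γ : V) (X : C) : C := (a.F.obj Γ).obj X

/-- The action of `Γ` on a morphism, `Γ ▷ f`. -/
abbrev actMap (a : LeftAction V C) (Γ : V) {X Y : C} (f : X ⟶ Y) :
    a.act Γ X ⟶ a.act Γ Y := (a.F.obj Γ).map f

/-- The action of a morphism of `V` on an object, `u ▷ X`. -/
abbrev actHom (a : LeftAction V C) {Γ Δ : V} (u : Γ ⟶ Δ) (X : C) :
    a.act Γ X ⟶ a.act Δ X := (a.F.map u).app X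

/-- Applying a morphism `f : Γ ▷ X ⟶ Y` to a point `γ : I ⟶ Γ`,
written `f⁻(γ)` in the paper. -/
def papp (a : LeftAction V C) {Γ : V} {X Y : C}
    (f : a.act Γ X ⟶ Y) (γ : 𝟙_ V ⟶ Γ) : X ⟶ Y :=
  (a.lam X).inv ≫ a.actHom γ X ≫ f

end LeftAction

/-- A strength for a functor `F : C ⥤ D`, with respect to left actions of `V`
on `C` and on `D`. -/
structure Strength {V : Type u₁} [Category.{v₁} V] [MonoidalCategory V]
    {C : Type u₂} [Category.{v₂} C] {D : Type u₃} [Category.{v₃} D]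
    (a : LeftAction V C) (b : LeftAction V D) (F : C ⥤ D) where
  str : ∀ (Γ : V) (X : C), b.act Γ (F.obj X) ⟶ F.obj (a.act Γ X)
  natural_fst : ∀ {Γ Δ : V} (u : Γ ⟶ Δ) (X : C),
    b.actHom u (F.obj X) ≫ str Δ X = str Γ X ≫ F.map (a.actHom u X)
  natural_snd : ∀ (Γ : V) {X Y : C} (f : X ⟶ Y),
    b.actMap Γ (F.map f) ≫ str Γ Y = str Γ X ≫ F.map (a.actMap Γ f)
  str_unit : ∀ X : C, str (𝟙_ V) X ≫ F.map (a.lam X).hom = (b.lam (F.obj X)).hom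
  str_assoc : ∀ (Γ' Γ : V) (X : C),
    (b.assoc Γ' Γ (F.obj X)).hom ≫ b.actMap Γ' (str Γ X) ≫ str Γ' (a.act Γ X)
      = str (Γ' ⊗ Γ) X ≫ F.map (a.assoc Γ' Γ X).hom

/-- A strong functor structure on an assignment of objects `obj : C → D` :
operations `F⟨Γ⟩` sending `f : Γ ▷ X ⟶ Y` to `F⟨Γ⟩ f : Γ ▷ F X ⟶ F Y`,
natural in `Γ` and compatible with the unitors and associators. -/
structure StrongFunctorStr {V : Type u₁} [Category.{v₁} V] [MonoidalCategory V]
    {C : Type u₂} [Category.{v₂} C] {D : Type u₃} [Category.{v₃} D]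
    (a : LeftAction V C) (b : LeftAction V D) (obj : C → D) where
  smap : ∀ {Γ : V} {X Y : C}, (a.act Γ X ⟶ Y) → (b.act Γ (obj X) ⟶ obj Y)
  natural : ∀ {Γ Δ : V} (u : Γ ⟶ Δ) {X Y : C} (f : a.act Δ X ⟶ Y),
    smap (a.actHom u X ≫ f) = b.actHom u (obj X) ≫ smap f
  unit : ∀ X : C, smap (a.lam X).hom = (b.lam (obj X)).hom
  comp : ∀ {Γ' Γ : V} {X Y Z : C} (f : a.act Γ X ⟶ Y) (g : a.act Γ' Y ⟶ Z),
    smap ((a.assoc Γ' Γ X).hom ≫ a.actMap Γ' f ≫ g)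
      = (b.assoc Γ' Γ (obj X)).hom ≫ b.actMap Γ' (smap f) ≫ smap g

/-- The strong-naturality condition for `τ : F ⟶ G` with respect to strengths
`sF`, `sG` : `τ_Y ∘ F⟨Γ⟩f = G⟨Γ⟩f ∘ (Γ ▷ τ_X)`, where `F⟨Γ⟩f = F f ∘ str`. -/
def IsStrongNatTrans {V : Type u₁} [Category.{v₁} V] [MonoidalCategory V]
    {C : Type u₂} [Category.{v₂} C] {D : Type u₃} [Category.{v₃} D]
    {a : LeftAction V C} {b : LeftAction V D} {F G : C ⥤ D}
    (sF : Strength a b F) (sG : Strength a b G) (τ : F ⟶ G) : Prop :=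
  ∀ (Γ : V) {X Y : C} (f : a.act Γ X ⟶ Y),
    (sF.str Γ X ≫ F.map f) ≫ τ.app Y = b.actMap Γ (τ.app X) ≫ (sG.str Γ X ≫ G.map f)

/-- A strong monad structure (Kleisli-extension presentation) over the
underlying data of a monad `T`, with respect to a left action of `V` on `C`. -/
structure StrongMonadStr {V : Type u₁} [Category.{v₁} V] [MonoidalCategory V]
    {C : Type u₂} [Category.{v₂} C] (a : LeftAction V C) (T : Monad C) where
  ext : ∀ {Γ : V} {X Y : C}, (a.act Γ X ⟶ T.obj Y) → (a.act Γ (T.obj X) ⟶ T.obj Y)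
  natural : ∀ {Γ Δ : V} (u : Γ ⟶ Δ) {X Y : C} (f : a.act Δ X ⟶ T.obj Y),
    ext (a.actHom u X ≫ f) = a.actHom u (T.obj X) ≫ ext f
  law_unit : ∀ X : C, ext ((a.lam X).hom ≫ T.η.app X) = (a.lam (T.obj X)).hom
  law_ext_unit : ∀ {Γ : V} {X Y : C} (f : a.act Γ X ⟶ T.obj Y),
    a.actMap Γ (T.η.app X) ≫ ext f = f
  law_assoc : ∀ {Γ' Γ : V} {X Y Z : C}
      (f : a.act Γ X ⟶ T.obj Y) (g : a.act Γ' Y ⟶ T.obj Z),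
    (a.assoc Γ' Γ (T.obj X)).hom ≫ a.actMap Γ' (ext f) ≫ ext g
      = ext ((a.assoc Γ' Γ X).hom ≫ a.actMap Γ' f ≫ ext g)

/-- The underlying ordinary monad of the strong monad structure `S` is `T`
itself: the functor part and the multiplication induced by the Kleisli
extension agree with those of `T`. -/
def StrongMonadStr.Underlies {V : Type u₁} [Category.{v₁} V] [MonoidalCategory V]
    {C : Type u₂} [Category.{v₂} C] {a : LeftAction V C} {T : Monad C}
    (S : StrongMonadStr a T) : Prop :=
  (∀ {X Y : C} (f : X ⟶ Y),
    T.map f = (a.lam (T.obj X)).inv ≫ S.ext ((a.lam X).hom ≫ f ≫ T.η.app Y)) ∧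
  (∀ X : C,
    T.μ.app X = (a.lam (T.obj (T.obj X))).inv ≫ S.ext ((a.lam (T.obj X)).hom))

/-- A strength for the functor of the monad `T` makes `η` and `μ` strong
natural transformations. -/
def StrengthCompat {V : Type u₁} [Category.{v₁} V] [MonoidalCategory V]
    {C : Type u₂} [Category.{v₂} C] (a : LeftAction V C) (T : Monad C)
    (s : Strength a a (T : C ⥤ C)) : Prop :=
  (∀ (Γ : V) (X : C),
    a.actMap Γ (T.η.app X) ≫ s.str Γ X = T.η.app (a.act Γ X)) ∧
  (∀ (Γ : V) (X : C),
    a.actMap Γ (T.μ.app X) ≫ s.str Γ X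
      = s.str Γ (T.obj X) ≫ T.map (s.str Γ X) ≫ T.μ.app (a.act Γ X))

/-! A strong Kleisli extension `♯` restricts, in the unit context, to an ordinary Kleisli
extension `f* = λ⁻¹ ≫ (λ ≫ f)♯`, which by the underlying-monad hypothesis computes `T f` and
`μ`. The associativity law then splits every extension through the strength `(η_{Γ▷X})♯`:
`f♯ = (η ≫ f*)♯ = η♯ ≫ f* = η♯ ≫ T f ≫ μ`. Conversely `f♯ := str ≫ T f ≫ μ` satisfies the
strong-monad laws as soon as `η` and `μ` are strong, and the two constructions are inverse. -/

namespace LeftAction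

variable {V : Type u₁} [Category.{v₁} V] [MonoidalCategory V]
variable {C : Type u₂} [Category.{v₂} C] (a : LeftAction V C)

lemma actMap_comp (Γ : V) {X Y Z : C} (f : X ⟶ Y) (g : Y ⟶ Z) :
    a.actMap Γ (f ≫ g) = a.actMap Γ f ≫ a.actMap Γ g :=
  Functor.map_comp _ f g

lemma actMap_id (Γ : V) (X : C) : a.actMap Γ (𝟙 X) = 𝟙 (a.act Γ X) :=
  CategoryTheory.Functor.map_id _ X

lemma actMap_unit {X Y : C} (f : X ⟶ Y) :
    a.actMap (𝟙_ V) f = (a.lam X).hom ≫ f ≫ (a.lam Y).inv := by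
  rw [← reassoc_of% a.lam_natural f, Iso.hom_inv_id, Category.comp_id]

lemma assoc_unit_left_hom (Γ : V) (X : C) :
    (a.assoc (𝟙_ V) Γ X).hom = a.actHom (λ_ Γ).hom X ≫ (a.lam (a.act Γ X)).inv := by
  rw [Iso.eq_comp_inv, a.unit_assoc]

lemma assoc_hom_actMap_lam (Γ : V) (X : C) :
    (a.assoc Γ (𝟙_ V) X).hom ≫ a.actMap Γ (a.lam X).hom = a.actHom (ρ_ Γ).hom X := by
  rw [← cancel_epi (a.actHom (ρ_ Γ).inv X), a.triangle]
  simp [← NatTrans.comp_app, ← Functor.map_comp]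

end LeftAction

namespace StrongMonadStr

variable {V : Type u₁} [Category.{v₁} V] [MonoidalCategory V]
variable {C : Type u₂} [Category.{v₂} C] {a : LeftAction V C} {T : Monad C}

lemma eq_of_ext_eq {S₁ S₂ : StrongMonadStr a T}
    (h : ∀ {Γ : V} {X Y : C} (f : a.act Γ X ⟶ T.obj Y), S₁.ext f = S₂.ext f) : S₁ = S₂ := by
  cases S₁; cases S₂
  congr
  funext Γ X Y f
  exact h f

variable (S : StrongMonadStr a T)

def bind {X Y : C} (h : X ⟶ T.obj Y) : T.obj X ⟶ T.obj Y :=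
  (a.lam (T.obj X)).inv ≫ S.ext ((a.lam X).hom ≫ h)

lemma ext_lam_comp {X Y : C} (h : X ⟶ T.obj Y) :
    S.ext ((a.lam X).hom ≫ h) = (a.lam (T.obj X)).hom ≫ S.bind h := by
  simp only [bind, Iso.hom_inv_id_assoc]

lemma unit_comp_bind {X Y : C} (h : X ⟶ T.obj Y) : T.η.app X ≫ S.bind h = h := by
  have h₁ := S.law_ext_unit ((a.lam X).hom ≫ h)
  simp only [a.actMap_unit, Category.assoc, ext_lam_comp, Iso.inv_hom_id_assoc] at h₁
  exact (cancel_epi (a.lam X).hom).mp h₁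

lemma ext_comp_bind {Γ : V} {X Y Z : C} (f : a.act Γ X ⟶ T.obj Y) (h : Y ⟶ T.obj Z) :
    S.ext f ≫ S.bind h = S.ext (f ≫ S.bind h) := by
  have h₁ := S.law_assoc f ((a.lam Y).hom ≫ h)
  simp only [a.actMap_unit, a.assoc_unit_left_hom, ext_lam_comp, Category.assoc,
    Iso.inv_hom_id_assoc, S.natural] at h₁
  exact (cancel_epi _).mp h₁

lemma bind_comp_bind {X Y Z : C} (g : X ⟶ T.obj Y) (h : Y ⟶ T.obj Z) :
    S.bind g ≫ S.bind h = S.bind (g ≫ S.bind h) := by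
  rw [bind, Category.assoc, ext_comp_bind, Category.assoc]
  rfl

lemma actMap_bind_comp_ext {Γ : V} {X Y Z : C} (h : X ⟶ T.obj Y) (g : a.act Γ Y ⟶ T.obj Z) :
    a.actMap Γ (S.bind h) ≫ S.ext g = S.ext (a.actMap Γ h ≫ S.ext g) := by
  have h₁ := S.law_assoc ((a.lam X).hom ≫ h) g
  simp only [ext_lam_comp, a.actMap_comp, Category.assoc,
    reassoc_of% a.assoc_hom_actMap_lam, S.natural] at h₁
  exact (cancel_epi _).mp h₁

namespace Underlies

variable {S}

lemma map_eq_bind (hU : S.Underlies) {X Y : C} (g : X ⟶ Y) :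
    T.map g = S.bind (g ≫ T.η.app Y) :=
  hU.1 g

lemma mu_eq_bind (hU : S.Underlies) (X : C) : T.μ.app X = S.bind (𝟙 (T.obj X)) := by
  rw [hU.2 X, bind, Category.comp_id]

lemma bind_eq_map_comp_mu (hU : S.Underlies) {X Y : C} (h : X ⟶ T.obj Y) :
    S.bind h = T.map h ≫ T.μ.app Y := by
  rw [hU.map_eq_bind, hU.mu_eq_bind, bind_comp_bind, Category.assoc, unit_comp_bind,
    Category.comp_id]

lemma ext_comp_map (hU : S.Underlies) {Γ : V} {X Y Z : C} (f : a.act Γ X ⟶ T.obj Y)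
    (g : Y ⟶ Z) :
    S.ext f ≫ T.map g = S.ext (f ≫ T.map g) := by
  rw [hU.map_eq_bind, ext_comp_bind]

lemma ext_comp_unit (hU : S.Underlies) {Γ : V} {X Y : C} (g : a.act Γ X ⟶ Y) :
    S.ext (g ≫ T.η.app Y) = S.ext (T.η.app (a.act Γ X)) ≫ T.map g := by
  rw [hU.ext_comp_map, ← T.η.naturality g]
  rfl

lemma ext_eq_ext_unit_map_mu (hU : S.Underlies) {Γ : V} {X Y : C}
    (f : a.act Γ X ⟶ T.obj Y) :
    S.ext f = S.ext (T.η.app (a.act Γ X)) ≫ T.map f ≫ T.μ.app Y := by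
  rw [← hU.bind_eq_map_comp_mu, ext_comp_bind, unit_comp_bind]

end Underlies

@[simps]
def toStrength (hU : S.Underlies) : Strength a a (T : C ⥤ C) where
  str Γ X := S.ext (T.η.app (a.act Γ X))
  natural_fst u X := by
    rw [← S.natural, ← hU.ext_comp_unit]
  natural_snd Γ X Y f := by
    rw [hU.map_eq_bind, actMap_bind_comp_ext, a.actMap_comp, Category.assoc, S.law_ext_unit,
      hU.ext_comp_unit]
  str_unit X := by
    rw [← hU.ext_comp_unit]
    exact S.law_unit X
  str_assoc Γ' Γ X := by
    rw [S.law_assoc, S.law_ext_unit, ← hU.ext_comp_unit]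

lemma toStrength_compat (hU : S.Underlies) : StrengthCompat a T (S.toStrength hU) := by
  refine ⟨fun Γ X => S.law_ext_unit _, fun Γ X => ?_⟩
  simp only [toStrength_str]
  rw [hU.mu_eq_bind, actMap_bind_comp_ext, a.actMap_id, Category.id_comp,
    hU.ext_eq_ext_unit_map_mu]

end StrongMonadStr

namespace Strength

variable {V : Type u₁} [Category.{v₁} V] [MonoidalCategory V]
variable {C : Type u₂} [Category.{v₂} C] {D : Type u₃} [Category.{v₃} D]
variable {a : LeftAction V C} {b : LeftAction V D}

@[ext]
lemma ext {F : C ⥤ D} {s₁ s₂ : Strength a b F} (h : ∀ Γ X, s₁.str Γ X = s₂.str Γ X) :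
    s₁ = s₂ := by
  cases s₁; cases s₂
  congr
  funext Γ X
  exact h Γ X

variable {T : Monad C} (s : Strength a a (T : C ⥤ C))

@[simps]
def toStrongMonadStr (hc : StrengthCompat a T s) : StrongMonadStr a T where
  ext {Γ X Y} f := s.str Γ X ≫ T.map f ≫ T.μ.app Y
  natural u X Y f := by
    rw [Functor.map_comp, Category.assoc]
    exact ((reassoc_of% s.natural_fst u X) _).symm
  law_unit X := by
    simp only [Functor.map_comp, Category.assoc, Monad.right_unit, Functor.id_obj,
      Category.comp_id]
    exact s.str_unit X
  law_ext_unit {Γ X Y} f := by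
    rw [reassoc_of% hc.1 Γ X, ← T.η.naturality_assoc f]
    simp only [Functor.id_obj, Functor.id_map, Monad.left_unit, Category.comp_id]
  law_assoc {Γ' Γ X Y Z} f g := by
    simp only [a.actMap_comp, Functor.map_comp, Category.assoc]
    rw [reassoc_of% hc.2 Γ' Y, reassoc_of% s.natural_snd Γ' f, ← T.μ.naturality_assoc g,
      ← T.assoc, reassoc_of% s.str_assoc Γ' Γ X]
    rfl

lemma toStrongMonadStr_underlies (hc : StrengthCompat a T s) :
    (s.toStrongMonadStr hc).Underlies := by
  constructor <;> intros <;> simp [reassoc_of% s.str_unit]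

end Strength

def strongMonadStrEquivStrength {V : Type u₁} [Category.{v₁} V] [MonoidalCategory V]
    {C : Type u₂} [Category.{v₂} C] (a : LeftAction V C) (T : Monad C) :
    {S : StrongMonadStr a T // S.Underlies}
      ≃ {s : Strength a a (T : C ⥤ C) // StrengthCompat a T s} where
  toFun S := ⟨S.1.toStrength S.2, S.1.toStrength_compat S.2⟩
  invFun s := ⟨s.1.toStrongMonadStr s.2, s.1.toStrongMonadStr_underlies s.2⟩
  left_inv S := Subtype.ext <| StrongMonadStr.eq_of_ext_eq fun f =>
    (S.2.ext_eq_ext_unit_map_mu f).symm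
  right_inv s := Subtype.ext <| Strength.ext fun Γ X => by simp

/-- for a monad `T` on `C` with a left action of `V` on `C`,
strong monad structures on `T` (Kleisli-extension presentations whose
underlying ordinary monad is `T`) are in bijection with strengths for the
functor of `T` making `η` and `μ` strong natural transformations; the
bijection is the canonical one, `str_{Γ,X} = (η_{Γ▷X})♯`. -/
theorem statement10 {V : Type u₁} [Category.{v₁} V] [MonoidalCategory V]
    {C : Type u₂} [Category.{v₂} C] (a : LeftAction V C) (T : Monad C) :
    ∃ e : {S : StrongMonadStr a T // S.Underlies}
          ≃ {s : Strength a a (T : C ⥤ C) // StrengthCompat a T s},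
      ∀ (S : {S : StrongMonadStr a T // S.Underlies}) (Γ : V) (X : C),
        (e S).1.str Γ X = S.1.ext (T.η.app (a.act Γ X)) :=
  ⟨strongMonadStrEquivStrength a T, fun _ _ _ => rfl⟩
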